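/- arXiv:2509.23871 — 2 statements merged into one kernel-verified Lean document; each statement's English description precedes it below -/
import Mathlib

section
/- Let E and F be real Hilbert spaces, let L_in : E × F → ℝ be twice continuously differentiable, and let ω* : F → E be differentiable with ∇_ω L_in(ω*(λ), λ) = 0 for all λ ∈ F. Fix λ, write H_ωω = D_ω(∇_ω L_in)(ω*(λ), λ) and H_ωλ = D_λ(∇_ω L_in)(ω*(λ), λ), and assume H_ωω is invertible. Let L_out : E × F → ℝ be differentiable and set g_ω = ∇_ω L_out(ω*(λ), λ) and g_λ = ∇_λ L_out(ω*(λ), λ). Then H_ωω is self-adjoint, and the gradient of the function h(λ) = L_out(ω*(λ), λ) is ∇h(λ) = g_λ − H_ωλ* (H_ωω⁻¹ g_ω), where H_ωλ* : E → F is the adjoint of H_ωλ. -/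
open InnerProductSpace ContinuousLinearMap

/-- Let `E` and `F` be real Hilbert spaces, let `L_in : E × F → ℝ` be twice
continuously differentiable, and let `ω* : F → E` be differentiable with
`∇_ω L_in(ω*(λ), λ) = 0` for all `λ ∈ F`. Fix `λ`, write
`H_ωω = D_ω(∇_ω L_in)(ω*(λ), λ)` and `H_ωλ = D_λ(∇_ω L_in)(ω*(λ), λ)`, and assume `H_ωω`
is invertible. Let `L_out : E × F → ℝ` be differentiable and set
`g_ω = ∇_ω L_out(ω*(λ), λ)` and `g_λ = ∇_λ L_out(ω*(λ), λ)`. Then `H_ωω` is self-adjoint,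
and the gradient of `h(λ) = L_out(ω*(λ), λ)` is `∇h(λ) = g_λ − H_ωλ* (H_ωω⁻¹ g_ω)`, where
`H_ωλ* : E → F` is the adjoint of `H_ωλ`. -/
theorem outer_gradient_via_implicit_differentiation
    {E F : Type*}
    [NormedAddCommGroup E] [InnerProductSpace ℝ E] [CompleteSpace E]
    [NormedAddCommGroup F] [InnerProductSpace ℝ F] [CompleteSpace F]
    (Lin : E × F → ℝ) (hLin : ContDiff ℝ 2 Lin)
    (ωs : F → E) (hωs : Differentiable ℝ ωs)
    (hopt : ∀ lam : F, gradient (fun ω => Lin (ω, lam)) (ωs lam) = 0)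
    (lam : F)
    (Hωω : E →L[ℝ] E)
    (hHωω : Hωω = fderiv ℝ (fun ω => gradient (fun w => Lin (w, lam)) ω) (ωs lam))
    (Hωl : F →L[ℝ] E)
    (hHωl : Hωl = fderiv ℝ (fun l => gradient (fun w => Lin (w, l)) (ωs lam)) lam)
    (hinv : IsUnit Hωω)
    (Lout : E × F → ℝ) (hLout : Differentiable ℝ Lout)
    (gω : E) (hgω : gω = gradient (fun ω => Lout (ω, lam)) (ωs lam))
    (gl : F) (hgl : gl = gradient (fun l => Lout (ωs lam, l)) lam) :
    IsSelfAdjoint Hωω ∧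
      gradient (fun l => Lout (ωs l, l)) lam
        = gl - (ContinuousLinearMap.adjoint Hωl) ((Ring.inverse Hωω) gω) := by
  classical
  set x₀ : E × F := (ωs lam, lam) with hx₀
  -- the dual-to-primal isometry as a continuous linear map
  let Ψe : StrongDual ℝ E ≃L[ℝ] E := (InnerProductSpace.toDual ℝ E).symm.toContinuousLinearEquiv
  let Ψ : (E →L[ℝ] ℝ) →L[ℝ] E := (Ψe : StrongDual ℝ E →L[ℝ] E)
  have hΨ : ∀ φ : E →L[ℝ] ℝ, Ψ φ = (InnerProductSpace.toDual ℝ E).symm φ := fun φ => rfl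
  -- precomposition with inl, then Ψ
  let Φ : ((E × F) →L[ℝ] ℝ) →L[ℝ] E :=
    Ψ.comp ((ContinuousLinearMap.compL ℝ E (E × F) ℝ).flip (ContinuousLinearMap.inl ℝ E F))
  have hΦ : ∀ T : (E × F) →L[ℝ] ℝ,
      Φ T = (InnerProductSpace.toDual ℝ E).symm (T.comp (ContinuousLinearMap.inl ℝ E F)) :=
    fun T => rfl
  have hLd : Differentiable ℝ Lin := hLin.differentiable (by norm_num)
  -- G is the partial gradient map
  set G : E × F → E := fun x => Φ (fderiv ℝ Lin x) with hGdef
  have hGgrad : ∀ (ω : E) (l : F), gradient (fun w => Lin (w, l)) ω = G (ω, l) := by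
    intro ω l
    have h1 : HasFDerivAt (fun w => Lin (w, l))
        ((fderiv ℝ Lin (ω, l)).comp (ContinuousLinearMap.inl ℝ E F)) ω :=
      (hLd (ω, l)).hasFDerivAt.comp ω (hasFDerivAt_prodMk_left ω l)
    rw [gradient, h1.fderiv]
    exact (hΦ _).symm
  have hDfd : Differentiable ℝ (fderiv ℝ Lin) :=
    (hLin.fderiv_right (m := 1) (by norm_num)).differentiable (by norm_num)
  have hG : Differentiable ℝ G := by exact Φ.differentiable.comp hDfd
  set DG : E × F →L[ℝ] E := fderiv ℝ G x₀ with hDG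
  -- identify Hωω and Hωl
  have hHωω1 : Hωω = DG.comp (ContinuousLinearMap.inl ℝ E F) := by
    rw [hHωω]
    have : (fun ω => gradient (fun w => Lin (w, lam)) ω) = fun ω => G (ω, lam) := by
      funext ω; exact hGgrad ω lam
    rw [this]
    exact ((hG x₀).hasFDerivAt.comp (ωs lam) (hasFDerivAt_prodMk_left (𝕜 := ℝ) (ωs lam) lam)).fderiv
  have hHωl1 : Hωl = DG.comp (ContinuousLinearMap.inr ℝ E F) := by
    rw [hHωl]
    have : (fun l => gradient (fun w => Lin (w, l)) (ωs lam)) = fun l => G (ωs lam, l) := by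
      funext l; exact hGgrad (ωs lam) l
    rw [this]
    exact ((hG x₀).hasFDerivAt.comp lam (hasFDerivAt_prodMk_right (ωs lam) lam)).fderiv
  -- implicit differentiation: Hωω (ωs' v) + Hωl v = 0
  set W : F →L[ℝ] E := fderiv ℝ ωs lam with hW
  have hpath : HasFDerivAt (fun l => (ωs l, l)) (W.prod (ContinuousLinearMap.id ℝ F)) lam :=
    (hωs lam).hasFDerivAt.prodMk (hasFDerivAt_id lam)
  have hchain : HasFDerivAt (fun l => G (ωs l, l)) (DG.comp (W.prod (ContinuousLinearMap.id ℝ F))) lam :=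
    HasFDerivAt.comp (g := G) (f := fun l => (ωs l, l)) lam (hG x₀).hasFDerivAt hpath
  have hzero : (fun l => G (ωs l, l)) = fun _ => (0 : E) := by
    funext l; rw [← hGgrad, hopt]
  have hDzero : DG.comp (W.prod (ContinuousLinearMap.id ℝ F)) = 0 := by
    have h0 : HasFDerivAt (fun _ : F => (0 : E)) (0 : F →L[ℝ] E) lam := hasFDerivAt_const 0 lam
    rw [hzero] at hchain
    exact hchain.unique h0
  have hkey : ∀ v : F, Hωω (W v) = - Hωl v := by
    intro v
    have h1 : DG (W v, v) = 0 := by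
      have := congrArg (fun (T : F →L[ℝ] E) => T v) hDzero
      simpa using this
    have h2 : (W v, v) = ((W v, 0) : E × F) + (0, v) := by simp
    have h3 : DG (W v, v) = Hωω (W v) + Hωl v := by
      rw [h2, map_add, hHωω1, hHωl1]; rfl
    rw [h3] at h1
    exact eq_neg_of_add_eq_zero_left h1
  -- self-adjointness of Hωω
  have hfC2 : ContDiff ℝ 2 (fun w => Lin (w, lam)) :=
    hLin.comp (contDiff_id.prodMk contDiff_const)
  have hf'd : Differentiable ℝ (fderiv ℝ (fun w => Lin (w, lam))) :=
    (hfC2.fderiv_right (m := 1) (by norm_num)).differentiable (by norm_num)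
  set D2 : E →L[ℝ] E →L[ℝ] ℝ := fderiv ℝ (fderiv ℝ (fun w => Lin (w, lam))) (ωs lam) with hD2
  have hsymm : ∀ u v : E, D2 u v = D2 v u := by
    intro u v
    exact (hfC2.contDiffAt.isSymmSndFDerivAt (by simp)) u v
  have hHωω2 : Hωω = Ψ.comp D2 := by
    rw [hHωω]
    have hgr : (fun ω => gradient (fun w => Lin (w, lam)) ω)
        = fun ω => Ψ (fderiv ℝ (fun w => Lin (w, lam)) ω) := by
      funext ω; rw [hΨ]; rfl
    rw [hgr]
    exact (Ψ.hasFDerivAt.comp (ωs lam) (hf'd (ωs lam)).hasFDerivAt).fderiv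
  have hinner : ∀ u v : E, ⟪Hωω u, v⟫_ℝ = D2 u v := by
    intro u v
    rw [hHωω2]
    show ⟪Ψ (D2 u), v⟫_ℝ = D2 u v
    rw [hΨ]
    exact InnerProductSpace.toDual_symm_apply
  have hsa : IsSelfAdjoint Hωω := by
    rw [ContinuousLinearMap.isSelfAdjoint_iff_isSymmetric]
    intro u v
    simp only [ContinuousLinearMap.coe_coe]
    rw [hinner u v, real_inner_comm, hinner v u, hsymm]
  refine ⟨hsa, ?_⟩
  -- the outer gradient formula
  set u : E := Ring.inverse Hωω gω with hu
  have hgωu : Hωω u = gω := by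
    have : Hωω (Ring.inverse Hωω gω) = (Hωω * Ring.inverse Hωω) gω := rfl
    rw [hu, this, Ring.mul_inverse_cancel _ hinv]; rfl
  set DLout : E × F →L[ℝ] ℝ := fderiv ℝ Lout x₀ with hDLout
  have hgωin : ∀ a : E, ⟪gω, a⟫_ℝ = DLout (a, 0) := by
    intro a
    have h1 : HasFDerivAt (fun ω => Lout (ω, lam))
        (DLout.comp (ContinuousLinearMap.inl ℝ E F)) (ωs lam) :=
      (hLout x₀).hasFDerivAt.comp (ωs lam) (hasFDerivAt_prodMk_left (ωs lam) lam)
    rw [hgω, gradient, h1.fderiv]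
    rw [InnerProductSpace.toDual_symm_apply]; rfl
  have hglin : ∀ b : F, ⟪gl, b⟫_ℝ = DLout (0, b) := by
    intro b
    have h1 : HasFDerivAt (fun l => Lout (ωs lam, l))
        (DLout.comp (ContinuousLinearMap.inr ℝ E F)) lam :=
      (hLout x₀).hasFDerivAt.comp lam (hasFDerivAt_prodMk_right (ωs lam) lam)
    rw [hgl, gradient, h1.fderiv]
    rw [InnerProductSpace.toDual_symm_apply]; rfl
  have hh : HasFDerivAt (fun l => Lout (ωs l, l))
      (DLout.comp (W.prod (ContinuousLinearMap.id ℝ F))) lam :=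
    HasFDerivAt.comp (g := Lout) (f := fun l => (ωs l, l)) lam (hLout x₀).hasFDerivAt hpath
  apply ext_inner_right ℝ
  intro v
  have hlhs : ⟪gradient (fun l => Lout (ωs l, l)) lam, v⟫_ℝ = DLout (W v, v) := by
    rw [gradient, hh.fderiv, InnerProductSpace.toDual_symm_apply]; rfl
  have hsplit : DLout (W v, v) = DLout (W v, 0) + DLout (0, v) := by
    rw [← map_add]; congr 1; simp
  have hterm : DLout (W v, 0) = - ⟪ContinuousLinearMap.adjoint Hωl u, v⟫_ℝ := by
    have h1 : ⟪Hωω u, W v⟫_ℝ = ⟪u, Hωω (W v)⟫_ℝ := hsa.isSymmetric u (W v)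
    rw [← hgωin, ← hgωu, h1, hkey v, inner_neg_right,
      ContinuousLinearMap.adjoint_inner_left]
  rw [hlhs, hsplit, hterm, ← hglin, inner_sub_left]
  ring
end

section
/- Let E and F be real Hilbert spaces, let Φ : E × F → E be continuously differentiable, and let ω* : F → E be differentiable with ω*(λ) = Φ(ω*(λ), λ) for all λ ∈ F. Fix λ, set J_ω = D_ω Φ(ω*(λ), λ) and J_λ = D_λ Φ(ω*(λ), λ), and assume I − J_ω is invertible. Let L_out : E × F → ℝ be differentiable and set g_ω = ∇_ω L_out(ω*(λ), λ) and g_λ = ∇_λ L_out(ω*(λ), λ). Then the gradient of h(λ) = L_out(ω*(λ), λ) is ∇h(λ) = g_λ + J_λ* ((I − J_ω*)⁻¹ g_ω), where * denotes the adjoint; in particular, if J_ω is self-adjoint this equals g_λ + J_λ* ((I − J_ω)⁻¹ g_ω). -/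
open InnerProductSpace ContinuousLinearMap

/-- Adjoint via `toDual`: pulling back a functional along a continuous linear map
corresponds to applying the adjoint to its Riesz representative. -/
lemma toDual_symm_comp
    {E F : Type*}
    [NormedAddCommGroup E] [InnerProductSpace ℝ E] [CompleteSpace E]
    [NormedAddCommGroup F] [InnerProductSpace ℝ F] [CompleteSpace F]
    (A : F →L[ℝ] E) (φ : E →L[ℝ] ℝ) :
    (toDual ℝ F).symm (φ.comp A)
      = ContinuousLinearMap.adjoint A ((toDual ℝ E).symm φ) := by
  apply ext_inner_right ℝ
  intro v
  rw [toDual_symm_apply, ContinuousLinearMap.adjoint_inner_left, toDual_symm_apply]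
  rfl

/-- Decompose composition with a product map into the two partial components. -/
lemma comp_prod_decomp
    {E F G : Type*}
    [NormedAddCommGroup E] [NormedSpace ℝ E]
    [NormedAddCommGroup F] [NormedSpace ℝ F]
    [NormedAddCommGroup G] [NormedSpace ℝ G]
    (A : F →L[ℝ] E) (T : E × F →L[ℝ] G) :
    T.comp (A.prod (ContinuousLinearMap.id ℝ F))
      = (T.comp (ContinuousLinearMap.inl ℝ E F)).comp A
        + T.comp (ContinuousLinearMap.inr ℝ E F) := by
  ext v
  have h : ((A v, v) : E × F) = ((A v, 0) : E × F) + (0, v) := by simp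
  simp only [ContinuousLinearMap.coe_comp', Function.comp_apply,
    ContinuousLinearMap.prod_apply, ContinuousLinearMap.add_apply,
    ContinuousLinearMap.inl_apply, ContinuousLinearMap.inr_apply,
    ContinuousLinearMap.coe_id', id_eq]
  rw [h, map_add]

/-- Let `E` and `F` be real Hilbert spaces, let `Φ : E × F → E` be
continuously differentiable, and let `ω* : F → E` be differentiable with
`ω*(λ) = Φ(ω*(λ), λ)` for all `λ ∈ F`. Fix `λ`, set `J_ω = D_ω Φ(ω*(λ), λ)` and
`J_λ = D_λ Φ(ω*(λ), λ)`, and assume `I − J_ω` is invertible. Let `L_out : E × F → ℝ` be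
differentiable and set `g_ω = ∇_ω L_out(ω*(λ), λ)` and `g_λ = ∇_λ L_out(ω*(λ), λ)`. Then
the gradient of `h(λ) = L_out(ω*(λ), λ)` is `∇h(λ) = g_λ + J_λ* ((I − J_ω*)⁻¹ g_ω)`, where
`*` denotes the adjoint; in particular, if `J_ω` is self-adjoint, this equals
`g_λ + J_λ* ((I − J_ω)⁻¹ g_ω)`. -/
theorem outer_gradient_via_fixed_point_differentiation
    {E F : Type*}
    [NormedAddCommGroup E] [InnerProductSpace ℝ E] [CompleteSpace E]
    [NormedAddCommGroup F] [InnerProductSpace ℝ F] [CompleteSpace F]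
    (Φ : E × F → E) (hΦ : ContDiff ℝ 1 Φ)
    (ωs : F → E) (hωs : Differentiable ℝ ωs)
    (hfix : ∀ lam : F, ωs lam = Φ (ωs lam, lam))
    (lam : F)
    (Jω : E →L[ℝ] E) (hJω : Jω = fderiv ℝ (fun ω => Φ (ω, lam)) (ωs lam))
    (Jl : F →L[ℝ] E) (hJl : Jl = fderiv ℝ (fun l => Φ (ωs lam, l)) lam)
    (hinv : IsUnit ((1 : E →L[ℝ] E) - Jω))
    (Lout : E × F → ℝ) (hLout : Differentiable ℝ Lout)
    (gω : E) (hgω : gω = gradient (fun ω => Lout (ω, lam)) (ωs lam))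
    (gl : F) (hgl : gl = gradient (fun l => Lout (ωs lam, l)) lam) :
    gradient (fun l => Lout (ωs l, l)) lam
        = gl + (ContinuousLinearMap.adjoint Jl)
            ((Ring.inverse ((1 : E →L[ℝ] E) - ContinuousLinearMap.adjoint Jω)) gω) ∧
      (IsSelfAdjoint Jω →
        gradient (fun l => Lout (ωs l, l)) lam
          = gl + (ContinuousLinearMap.adjoint Jl)
              ((Ring.inverse ((1 : E →L[ℝ] E) - Jω)) gω)) := by
  have hΦd : Differentiable ℝ Φ := hΦ.differentiable one_ne_zero
  set p : E × F := (ωs lam, lam) with hp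
  set DΦ : E × F →L[ℝ] E := fderiv ℝ Φ p with hDΦ
  set D : E × F →L[ℝ] ℝ := fderiv ℝ Lout p with hD
  set ω' : F →L[ℝ] E := fderiv ℝ ωs lam with hω'
  have hpair : HasFDerivAt (fun l : F => (ωs l, l))
      (ω'.prod (ContinuousLinearMap.id ℝ F)) lam :=
    HasFDerivAt.prodMk (hωs lam).hasFDerivAt (hasFDerivAt_id lam)
  -- Jω and Jl in terms of DΦ
  have hJω' : Jω = DΦ.comp (ContinuousLinearMap.inl ℝ E F) := by
    have h := ((hΦd p).hasFDerivAt).comp (f := fun ω : E => (ω, lam)) (ωs lam)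
      (hasFDerivAt_prodMk_left (ωs lam) lam)
    simp only [Function.comp_def] at h
    rw [hJω, h.fderiv]
  have hJl' : Jl = DΦ.comp (ContinuousLinearMap.inr ℝ E F) := by
    have h := ((hΦd p).hasFDerivAt).comp lam
      (hasFDerivAt_prodMk_right (ωs lam) lam)
    simp only [Function.comp_def] at h
    rw [hJl, h.fderiv]
  -- implicit differentiation of the fixed-point equation
  have hcomp : HasFDerivAt (fun l : F => Φ (ωs l, l))
      (DΦ.comp (ω'.prod (ContinuousLinearMap.id ℝ F))) lam := by
    have h := HasFDerivAt.comp (f := fun l : F => (ωs l, l)) lam ((hΦd p).hasFDerivAt) hpair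
    simpa only [Function.comp_def] using h
  have heqfun : (fun l : F => Φ (ωs l, l)) = ωs := funext fun l => (hfix l).symm
  have hω'eq : ω' = DΦ.comp (ω'.prod (ContinuousLinearMap.id ℝ F)) := by
    conv_lhs => rw [hω', ← heqfun]
    exact hcomp.fderiv
  have hfix' : ω' = Jω.comp ω' + Jl := by
    rw [hJω', hJl', ← comp_prod_decomp ω' DΦ]; exact hω'eq
  have hsub : ((1 : E →L[ℝ] E) - Jω).comp ω' = Jl := by
    rw [ContinuousLinearMap.sub_comp, ContinuousLinearMap.one_def,
      ContinuousLinearMap.id_comp]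
    exact sub_eq_of_eq_add' hfix'
  have hω'inv : ω' = (Ring.inverse ((1 : E →L[ℝ] E) - Jω)).comp Jl := by
    rw [← hsub, ← ContinuousLinearMap.comp_assoc, ← ContinuousLinearMap.mul_def,
      Ring.inverse_mul_cancel _ hinv, ContinuousLinearMap.one_def,
      ContinuousLinearMap.id_comp]
  -- chain rule for the outer loss
  have hh : HasFDerivAt (fun l : F => Lout (ωs l, l))
      (D.comp (ω'.prod (ContinuousLinearMap.id ℝ F))) lam := by
    have h := HasFDerivAt.comp (f := fun l : F => (ωs l, l)) lam ((hLout p).hasFDerivAt) hpair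
    simpa only [Function.comp_def] using h
  have hDω : fderiv ℝ (fun ω => Lout (ω, lam)) (ωs lam)
      = D.comp (ContinuousLinearMap.inl ℝ E F) := by
    have h := ((hLout p).hasFDerivAt).comp (f := fun ω : E => (ω, lam)) (ωs lam)
      (hasFDerivAt_prodMk_left (ωs lam) lam)
    simp only [Function.comp_def] at h
    rw [h.fderiv]
  have hDl : fderiv ℝ (fun l => Lout (ωs lam, l)) lam
      = D.comp (ContinuousLinearMap.inr ℝ E F) := by
    have h := ((hLout p).hasFDerivAt).comp lam
      (hasFDerivAt_prodMk_right (ωs lam) lam)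
    simp only [Function.comp_def] at h
    rw [h.fderiv]
  have key : gradient (fun l => Lout (ωs l, l)) lam
      = gl + ContinuousLinearMap.adjoint ω' gω := by
    simp only [gradient]
    rw [hh.fderiv, comp_prod_decomp ω' D, map_add, ContinuousLinearMap.comp_assoc]
    rw [hgl, hgω]
    simp only [gradient]
    rw [hDω, hDl]
    rw [add_comm, ← ContinuousLinearMap.comp_assoc, toDual_symm_comp]
  have hadj : ContinuousLinearMap.adjoint ω'
      = (ContinuousLinearMap.adjoint Jl).comp
          (Ring.inverse ((1 : E →L[ℝ] E) - ContinuousLinearMap.adjoint Jω)) := by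
    rw [hω'inv, ContinuousLinearMap.adjoint_comp]
    congr 1
    rw [← ContinuousLinearMap.star_eq_adjoint, ← Ring.inverse_star]
    congr 1
    rw [star_sub, star_one, ContinuousLinearMap.star_eq_adjoint]
  constructor
  · rw [key, hadj]; rfl
  · intro hsa
    rw [key, hadj, hsa.adjoint_eq]; rfl
end
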